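/- arXiv:2509.14578 — 3 statements merged into one kernel-verified Lean document; each statement's English description precedes it below -/
import Mathlib

section
/- Let x : ℝ² → ℝ and z : ℝ² → ℂ be differentiable at a point p, with Δ(p) := x(p)(1−x(p)) − |z(p)|² > 0, and set C := 2√Δ (so C is differentiable at p). Let r := (2·Re z, −2·Im z, 2x−1) : ℝ² → ℝ³ be the Bloch map, so 1 − ‖r(p)‖² = C(p)² > 0. Then for any real coefficients A and B and all indices μ, ν ∈ {1,2}, the tensor F_{μν} := A·(∂_μ r(p) · ∂_ν r(p)) + B·(r(p) · ∂_μ r(p))·(r(p) · ∂_ν r(p)) / (1 − ‖r(p)‖²) satisfies the three-channel decomposition F_{μν} = 4A·(∂_μ x(p)·∂_ν x(p) + Re(∂_μ z(p)·conj(∂_ν z(p)))) + B·∂_μ C(p)·∂_ν C(p). -/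
/-!
Write `Δ = x(1 − x) − |z|²`, the determinant of the reduced state `[[x, z], [z̄, 1 − x]]`.
Pointwise `1 − ‖r‖² = 4Δ`, so `r · ∂r = ½ ∂‖r‖² = −2 ∂Δ`, while `C = 2√Δ` gives `∂C = ∂Δ / √Δ`.
Hence `(r · ∂_μ r)(r · ∂_ν r) / (1 − ‖r‖²) = ∂_μΔ ∂_νΔ / Δ = ∂_μC ∂_νC`, and the
`A`-channel is `∂_μ r · ∂_ν r = 4 (∂_μx ∂_νx + Re (∂_μz conj ∂_νz))` componentwise.
-/

/-- Partial derivative of a real-valued map on `ℝ²` in the `μ`-th coordinate direction. -/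
noncomputable def pderivR (f : (Fin 2 → ℝ) → ℝ) (p : Fin 2 → ℝ) (μ : Fin 2) : ℝ :=
  fderiv ℝ f p (Pi.single μ 1)

/-- Partial derivative of a complex-valued map on `ℝ²` in the `μ`-th coordinate direction. -/
noncomputable def pderivC (f : (Fin 2 → ℝ) → ℂ) (p : Fin 2 → ℝ) (μ : Fin 2) : ℂ :=
  fderiv ℝ f p (Pi.single μ 1)

/-- The concurrence `C = 2√(x(1−x) − |z|²)` of the reduced state family. -/
noncomputable def concur (x : (Fin 2 → ℝ) → ℝ) (z : (Fin 2 → ℝ) → ℂ) : (Fin 2 → ℝ) → ℝ :=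
  fun q => 2 * Real.sqrt (x q * (1 - x q) - ‖z q‖ ^ 2)

/-- The three components of the Bloch map `r = (2 Re z, −2 Im z, 2x − 1)`. -/
noncomputable def bloch1 (z : (Fin 2 → ℝ) → ℂ) : (Fin 2 → ℝ) → ℝ := fun q => 2 * (z q).re
noncomputable def bloch2 (z : (Fin 2 → ℝ) → ℂ) : (Fin 2 → ℝ) → ℝ := fun q => -2 * (z q).im
noncomputable def bloch3 (x : (Fin 2 → ℝ) → ℝ) : (Fin 2 → ℝ) → ℝ := fun q => 2 * x q - 1

open ComplexConjugate

noncomputable def reducedDet (x : (Fin 2 → ℝ) → ℝ) (z : (Fin 2 → ℝ) → ℂ) (q : Fin 2 → ℝ) : ℝ :=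
  x q * (1 - x q) - ‖z q‖ ^ 2

section

variable {x : (Fin 2 → ℝ) → ℝ} {z : (Fin 2 → ℝ) → ℂ} {p : Fin 2 → ℝ}

theorem concur_eq_two_mul_sqrt_reducedDet (x : (Fin 2 → ℝ) → ℝ) (z : (Fin 2 → ℝ) → ℂ) :
    concur x z = fun q => 2 * Real.sqrt (reducedDet x z q) :=
  rfl

theorem concur_sq (hΔ : 0 ≤ reducedDet x z p) : concur x z p ^ 2 = 4 * reducedDet x z p := by
  rw [concur_eq_two_mul_sqrt_reducedDet, mul_pow, Real.sq_sqrt hΔ]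
  norm_num

theorem one_sub_bloch_normSq (x : (Fin 2 → ℝ) → ℝ) (z : (Fin 2 → ℝ) → ℂ) (q : Fin 2 → ℝ) :
    1 - (bloch1 z q ^ 2 + bloch2 z q ^ 2 + bloch3 x q ^ 2) = 4 * reducedDet x z q := by
  simp only [bloch1, bloch2, bloch3, reducedDet, Complex.sq_norm, Complex.normSq_apply]
  ring

theorem HasFDerivAt.pderivR_eq {f : (Fin 2 → ℝ) → ℝ} {f' : (Fin 2 → ℝ) →L[ℝ] ℝ}
    (hf : HasFDerivAt f f' p) (μ : Fin 2) : pderivR f p μ = f' (Pi.single μ 1) := by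
  rw [pderivR, hf.fderiv]

theorem pderivR_bloch1 (hz : DifferentiableAt ℝ z p) (μ : Fin 2) :
    pderivR (bloch1 z) p μ = 2 * (pderivC z p μ).re := by
  have h : HasFDerivAt (bloch1 z) _ p :=
    (Complex.reCLM.hasFDerivAt.comp p hz.hasFDerivAt).const_mul 2
  rw [h.pderivR_eq]
  rfl

theorem pderivR_bloch2 (hz : DifferentiableAt ℝ z p) (μ : Fin 2) :
    pderivR (bloch2 z) p μ = -2 * (pderivC z p μ).im := by
  have h : HasFDerivAt (bloch2 z) _ p :=
    (Complex.imCLM.hasFDerivAt.comp p hz.hasFDerivAt).const_mul (-2)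
  rw [h.pderivR_eq]
  rfl

theorem pderivR_bloch3 (hx : DifferentiableAt ℝ x p) (μ : Fin 2) :
    pderivR (bloch3 x) p μ = 2 * pderivR x p μ := by
  have h : HasFDerivAt (bloch3 x) _ p := (hx.hasFDerivAt.const_mul 2).sub_const 1
  rw [h.pderivR_eq]
  rfl

theorem hasFDerivAt_reducedDet (hx : DifferentiableAt ℝ x p) (hz : DifferentiableAt ℝ z p) :
    HasFDerivAt (reducedDet x z) (x p • (-fderiv ℝ x p) + (1 - x p) • fderiv ℝ x p
      - 2 • (innerSL ℝ (z p)).comp (fderiv ℝ z p)) p :=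
  (hx.hasFDerivAt.mul (hx.hasFDerivAt.const_sub 1)).sub hz.hasFDerivAt.norm_sq

theorem pderivR_reducedDet (hx : DifferentiableAt ℝ x p) (hz : DifferentiableAt ℝ z p)
    (μ : Fin 2) :
    pderivR (reducedDet x z) p μ =
      (1 - 2 * x p) * pderivR x p μ - 2 * (pderivC z p μ * conj (z p)).re := by
  rw [(hasFDerivAt_reducedDet hx hz).pderivR_eq]
  simp [pderivR, pderivC, Complex.inner]
  ring

theorem hasFDerivAt_concur (hx : DifferentiableAt ℝ x p) (hz : DifferentiableAt ℝ z p)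
    (hΔ : 0 < reducedDet x z p) :
    HasFDerivAt (concur x z)
      ((Real.sqrt (reducedDet x z p))⁻¹ • fderiv ℝ (reducedDet x z) p) p := by
  refine (((hasFDerivAt_reducedDet hx hz).differentiableAt.hasFDerivAt.sqrt hΔ.ne').const_mul
    2).congr_fderiv ?_
  rw [smul_smul]
  field_simp

theorem pderivR_concur (hx : DifferentiableAt ℝ x p) (hz : DifferentiableAt ℝ z p)
    (hΔ : 0 < reducedDet x z p) (μ : Fin 2) :
    pderivR (concur x z) p μ = pderivR (reducedDet x z) p μ / Real.sqrt (reducedDet x z p) := by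
  rw [(hasFDerivAt_concur hx hz hΔ).pderivR_eq, pderivR, smul_apply, smul_eq_mul,
    inv_mul_eq_div]

theorem bloch_dot_pderivR (hx : DifferentiableAt ℝ x p) (hz : DifferentiableAt ℝ z p)
    (μ : Fin 2) :
    bloch1 z p * pderivR (bloch1 z) p μ + bloch2 z p * pderivR (bloch2 z) p μ
      + bloch3 x p * pderivR (bloch3 x) p μ = -2 * pderivR (reducedDet x z) p μ := by
  rw [pderivR_bloch1 hz, pderivR_bloch2 hz, pderivR_bloch3 hx, pderivR_reducedDet hx hz,
    Complex.mul_re, Complex.conj_re, Complex.conj_im, bloch1, bloch2, bloch3]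
  ring

theorem pderivR_bloch_dot_pderivR (hx : DifferentiableAt ℝ x p) (hz : DifferentiableAt ℝ z p)
    (μ ν : Fin 2) :
    pderivR (bloch1 z) p μ * pderivR (bloch1 z) p ν
      + pderivR (bloch2 z) p μ * pderivR (bloch2 z) p ν
      + pderivR (bloch3 x) p μ * pderivR (bloch3 x) p ν
      = 4 * (pderivR x p μ * pderivR x p ν + (pderivC z p μ * conj (pderivC z p ν)).re) := by
  rw [pderivR_bloch1 hz, pderivR_bloch1 hz, pderivR_bloch2 hz, pderivR_bloch2 hz,
    pderivR_bloch3 hx, pderivR_bloch3 hx, Complex.mul_re, Complex.conj_re, Complex.conj_im]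
  ring

end

/-- Universal three-channel identity for Petz monotone metrics:
the tensor `F_{μν} = A (∂_μ r · ∂_ν r) + B (r·∂_μ r)(r·∂_ν r)/(1 − ‖r‖²)` equals
`4A (∂_μ x ∂_ν x + Re(∂_μ z conj ∂_ν z)) + B ∂_μ C ∂_ν C`.  Here `C` is
differentiable at `p` and `1 − ‖r(p)‖² = C(p)² > 0`. -/
theorem three_channel_identity (x : (Fin 2 → ℝ) → ℝ) (z : (Fin 2 → ℝ) → ℂ) (p : Fin 2 → ℝ)
    (hx : DifferentiableAt ℝ x p) (hz : DifferentiableAt ℝ z p)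
    (hΔ : x p * (1 - x p) - ‖z p‖ ^ 2 > 0) :
    DifferentiableAt ℝ (concur x z) p ∧
    1 - (bloch1 z p ^ 2 + bloch2 z p ^ 2 + bloch3 x p ^ 2) = concur x z p ^ 2 ∧
    0 < concur x z p ^ 2 ∧
    ∀ (A B : ℝ) (μ ν : Fin 2),
      A * (pderivR (bloch1 z) p μ * pderivR (bloch1 z) p ν
            + pderivR (bloch2 z) p μ * pderivR (bloch2 z) p ν
            + pderivR (bloch3 x) p μ * pderivR (bloch3 x) p ν)
        + B * ((bloch1 z p * pderivR (bloch1 z) p μ + bloch2 z p * pderivR (bloch2 z) p μ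
                  + bloch3 x p * pderivR (bloch3 x) p μ)
              * (bloch1 z p * pderivR (bloch1 z) p ν + bloch2 z p * pderivR (bloch2 z) p ν
                  + bloch3 x p * pderivR (bloch3 x) p ν))
          / (1 - (bloch1 z p ^ 2 + bloch2 z p ^ 2 + bloch3 x p ^ 2))
      = 4 * A * (pderivR x p μ * pderivR x p ν
            + (pderivC z p μ * (starRingEnd ℂ) (pderivC z p ν)).re)
        + B * pderivR (concur x z) p μ * pderivR (concur x z) p ν := by
  have hΔ : 0 < reducedDet x z p := hΔ
  refine ⟨(hasFDerivAt_concur hx hz hΔ).differentiableAt,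
    by rw [one_sub_bloch_normSq, concur_sq hΔ.le], by rw [concur_sq hΔ.le]; positivity, ?_⟩
  intro A B μ ν
  have hsqrt : Real.sqrt (reducedDet x z p) ^ 2 = reducedDet x z p := Real.sq_sqrt hΔ.le
  rw [pderivR_bloch_dot_pderivR hx hz, bloch_dot_pderivR hx hz, bloch_dot_pderivR hx hz,
    one_sub_bloch_normSq, pderivR_concur hx hz hΔ, pderivR_concur hx hz hΔ]
  field_simp
  rw [hsqrt]
  ring
end

section
/- Let x ∈ ℝ and z = u + iv ∈ ℂ with Δ := x(1−x) − |z|² > 0, and let ẋ ∈ ℝ, ż = p + iq ∈ ℂ be arbitrary. Set α := |z|² = u² + v², β := 2·Re(ż·conj z) = 2(pu + qv), and define x_L := (β(x−1) − ẋ(2α + x − 1))/Δ, y_L := ((2α − x)ẋ − βx)/Δ, S := x_L + y_L, a := 2p − u·S, b := 2q − v·S. Then the Hermitian matrix L := [[x_L, a + ib],[a − ib, y_L]] satisfies the Lyapunov (SLD) equation ρ̇ = (1/2)(ρL + Lρ), where ρ := [[x, z],[conj z, 1−x]] and ρ̇ := [[ẋ, ż],[conj ż, −ẋ]]. -/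
open Complex ComplexConjugate

/-
For `ρ` of trace one, the off-diagonal entry of `ρL + Lρ` is `ℓ + (tr L) z`, where `ℓ = a + ib`;
so the off-diagonal equation only asks `ℓ = 2ż − S z`, which is how `a` and `b` are chosen. Then
`Re (ℓ z̄) = β − α S`, and the diagonal equations become the linear system
`(x − α) x_L − α y_L = ẋ − β`, `−α x_L + (1 − x − α) y_L = −ẋ − β` of determinant
`x(1 − x) − α = Δ`, solved by Cramer's rule.
-/

theorem Matrix.unitTrace_anticomm_fin_two {R : Type*} [CommRing R] (x z w s ℓ m t : R) :
    !![x, z; w, 1 - x] * !![s, ℓ; m, t] + !![s, ℓ; m, t] * !![x, z; w, 1 - x] =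
      !![2 * x * s + z * m + ℓ * w, ℓ + (s + t) * z;
        m + (s + t) * w, 2 * (1 - x) * t + w * ℓ + m * z] := by
  ext i j
  fin_cases i <;> fin_cases j <;> simp <;> ring

theorem sld_diagonal_solution {K : Type*} [Field K] {x α β xd Δ xL yL : K}
    (hΔ : x * (1 - x) - α = Δ) (hΔ0 : Δ ≠ 0)
    (hxL : xL = (β * (x - 1) - xd * (2 * α + x - 1)) / Δ)
    (hyL : yL = ((2 * α - x) * xd - β * x) / Δ) :
    x * xL + (β - α * (xL + yL)) = xd ∧ (1 - x) * yL + (β - α * (xL + yL)) = -xd := by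
  subst hΔ hxL hyL
  constructor <;> · field_simp; ring

/-- Closed-form SLD for a full-rank `2×2` density matrix: with
`Δ = x(1−x) − |z|² > 0` and tangent data `(xd, zd) = (ẋ, ż)`, the explicitly
constructed Hermitian matrix `L` solves the Lyapunov equation
`ρ̇ = (1/2)(ρL + Lρ)`. -/
theorem sld_closed_form (x : ℝ) (z : ℂ) (xd : ℝ) (zd : ℂ)
    (hΔ : x * (1 - x) - ‖z‖ ^ 2 > 0) :
    let Δ : ℝ := x * (1 - x) - ‖z‖ ^ 2
    let u : ℝ := z.re
    let v : ℝ := z.im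
    let p : ℝ := zd.re
    let q : ℝ := zd.im
    let α : ℝ := u ^ 2 + v ^ 2
    let β : ℝ := 2 * (p * u + q * v)
    let xL : ℝ := (β * (x - 1) - xd * (2 * α + x - 1)) / Δ
    let yL : ℝ := ((2 * α - x) * xd - β * x) / Δ
    let S : ℝ := xL + yL
    let a : ℝ := 2 * p - u * S
    let b : ℝ := 2 * q - v * S
    let ρ : Matrix (Fin 2) (Fin 2) ℂ := !![(x : ℂ), z; (starRingEnd ℂ) z, 1 - (x : ℂ)]
    let ρdot : Matrix (Fin 2) (Fin 2) ℂ := !![(xd : ℂ), zd; (starRingEnd ℂ) zd, -(xd : ℂ)]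
    let L : Matrix (Fin 2) (Fin 2) ℂ :=
      !![(xL : ℂ), (a : ℂ) + (b : ℂ) * Complex.I;
         (a : ℂ) - (b : ℂ) * Complex.I, (yL : ℂ)]
    ρdot = (1 / 2 : ℂ) • (ρ * L + L * ρ) := by
  intro Δ u v p q α β xL yL S a b ρ ρdot L
  have hα : ‖z‖ ^ 2 = α := by rw [Complex.sq_norm, Complex.normSq_apply]; ring
  obtain ⟨hx, hy⟩ := sld_diagonal_solution (by rw [hα]) hΔ.ne' (xL := xL) (yL := yL) rfl rfl
  have hℓ : (a : ℂ) + b * I = 2 * zd - (xL + yL) * z := by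
    apply Complex.ext <;> simp [a, b, S, p, q, u, v] <;> ring
  have hℓ' : (a : ℂ) - b * I = 2 * conj zd - (xL + yL) * conj z := by
    simpa [sub_eq_add_neg, map_ofNat] using congrArg conj hℓ
  have hdiag : z * ((a : ℂ) - b * I) + (a + b * I) * conj z = 2 * (β - α * (xL + yL)) := by
    apply Complex.ext <;> simp [a, b] <;> simp only [β, α, u, v, S] <;> ring
  have hx' : (x : ℂ) * xL + (β - α * (xL + yL)) = xd := by exact_mod_cast hx
  have hy' : (1 - x : ℂ) * yL + (β - α * (xL + yL)) = -xd := by exact_mod_cast hy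
  simp only [ρ, ρdot, L, Matrix.unitTrace_anticomm_fin_two]
  ext i j
  fin_cases i <;> fin_cases j <;> simp
  · linear_combination -hx' - hdiag / 2
  · linear_combination -hℓ / 2
  · linear_combination -hℓ' / 2
  · linear_combination -hy' - hdiag / 2
end

section
/- Let m be a positive natural number and let x, w₁, w₂ : ℝ^m → ℝ be differentiable at a point θ with Δ(θ) := x(θ)(1−x(θ)) − w₁(θ)² − w₂(θ)² > 0, and set 𝒞 := 2√(x(1−x) − w₁² − w₂²) (differentiable at θ). Then the m×m real matrix F with entries F_{ij} := 4·∂_i x(θ)·∂_j x(θ) + 4·∂_i w₁(θ)·∂_j w₁(θ) + 4·∂_i w₂(θ)·∂_j w₂(θ) + ∂_i 𝒞(θ)·∂_j 𝒞(θ) has rank at most 3. -/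
/-!
The concurrence is a differentiable function of the three Bloch coordinates `(x, w₁, w₂)` on
the region `Δ > 0`, so by the chain rule its gradient is a linear combination of their gradients.
Hence every column `F.col j` is a combination of `∇x, ∇w₁, ∇w₂, ∇𝒞`, all of which lie in the
span of the three coordinate gradients, and the column space of `F` has dimension at most `3`.
-/

/-- Partial derivative of a real-valued map on `ℝ^m` in the `i`-th coordinate direction. -/
noncomputable def pderivM (m : ℕ) (f : (Fin m → ℝ) → ℝ) (θ : Fin m → ℝ) (i : Fin m) : ℝ :=
  fderiv ℝ f θ (Pi.single i 1)

open Submodule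

theorem Matrix.rank_le_card_of_col_mem_span {R m n ι : Type*} [Field R] [Fintype m] [Fintype n]
    [Fintype ι] (A : Matrix m n R) (v : ι → m → R) (h : ∀ j, A.col j ∈ span R (Set.range v)) :
    A.rank ≤ Fintype.card ι := by
  rw [A.rank_eq_finrank_span_cols]
  calc Module.finrank R (span R (Set.range A.col))
      ≤ Module.finrank R (span R (Set.range v)) :=
        Submodule.finrank_mono (span_le.mpr (Set.range_subset_iff.mpr h))
    _ ≤ Fintype.card ι := finrank_range_le_card v

theorem fderiv_comp_pi_eq_sum {E ι : Type*} [NormedAddCommGroup E] [NormedSpace ℝ E] [Fintype ι]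
    [DecidableEq ι] {h : (ι → ℝ) → ℝ} {f : ι → E → ℝ} {θ : E}
    (hh : DifferentiableAt ℝ h (fun k => f k θ)) (hf : ∀ k, DifferentiableAt ℝ (f k) θ) :
    fderiv ℝ (fun η => h fun k => f k η) θ
      = ∑ k, fderiv ℝ h (fun k => f k θ) (Pi.single k 1) • fderiv ℝ (f k) θ := by
  have hF : HasFDerivAt (fun η k => f k η) (ContinuousLinearMap.pi fun k => fderiv ℝ (f k) θ) θ :=
    hasFDerivAt_pi.mpr fun k => (hf k).hasFDerivAt
  have hcomp : HasFDerivAt (fun η => h fun k => f k η) _ θ := hh.hasFDerivAt.comp θ hF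
  rw [hcomp.fderiv]
  ext e
  show fderiv ℝ h _ (fun k => fderiv ℝ (f k) θ e) = _
  rw [pi_eq_sum_univ' fun k => fderiv ℝ (f k) θ e]
  simp [mul_comm]

theorem pderivM_comp_mem_span {m n : ℕ} {h : (Fin n → ℝ) → ℝ} {f : Fin n → (Fin m → ℝ) → ℝ}
    {θ : Fin m → ℝ} (hh : DifferentiableAt ℝ h (fun k => f k θ))
    (hf : ∀ k, DifferentiableAt ℝ (f k) θ) :
    pderivM m (fun η => h fun k => f k η) θ ∈ span ℝ (Set.range fun k => pderivM m (f k) θ) := by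
  refine (mem_span_range_iff_exists_fun ℝ).mpr
    ⟨fun k => fderiv ℝ h (fun k => f k θ) (Pi.single k 1), ?_⟩
  ext i
  simp [pderivM, fderiv_comp_pi_eq_sum hh hf]

noncomputable def concurrence (p : Fin 3 → ℝ) : ℝ :=
  2 * √(p 0 * (1 - p 0) - p 1 ^ 2 - p 2 ^ 2)

theorem differentiableAt_concurrence {p : Fin 3 → ℝ}
    (hp : 0 < p 0 * (1 - p 0) - p 1 ^ 2 - p 2 ^ 2) : DifferentiableAt ℝ concurrence p := by
  unfold concurrence
  fun_prop (disch := exact hp.ne')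

theorem qfim_rank_le_three_general (m : ℕ)
    (x w₁ w₂ : (Fin m → ℝ) → ℝ) (θ : Fin m → ℝ)
    (hx : DifferentiableAt ℝ x θ) (hw₁ : DifferentiableAt ℝ w₁ θ)
    (hw₂ : DifferentiableAt ℝ w₂ θ)
    (hΔ : x θ * (1 - x θ) - w₁ θ ^ 2 - w₂ θ ^ 2 > 0) :
    let 𝒞 : (Fin m → ℝ) → ℝ :=
      fun η => 2 * Real.sqrt (x η * (1 - x η) - w₁ η ^ 2 - w₂ η ^ 2)
    let F : Matrix (Fin m) (Fin m) ℝ := Matrix.of fun i j =>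
      4 * pderivM m x θ i * pderivM m x θ j
        + 4 * pderivM m w₁ θ i * pderivM m w₁ θ j
        + 4 * pderivM m w₂ θ i * pderivM m w₂ θ j
        + pderivM m 𝒞 θ i * pderivM m 𝒞 θ j
    F.rank ≤ 3 := by
  intro 𝒞 F
  set ρ : Fin 3 → (Fin m → ℝ) → ℝ := ![x, w₁, w₂]
  set grad : Fin 3 → Fin m → ℝ := fun k => pderivM m (ρ k) θ
  have hgrad (k : Fin 3) : grad k ∈ span ℝ (Set.range grad) := subset_span ⟨k, rfl⟩
  have h𝒞 : pderivM m 𝒞 θ ∈ span ℝ (Set.range grad) :=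
    pderivM_comp_mem_span (h := concurrence) (f := ρ) (differentiableAt_concurrence hΔ)
      (by simp [ρ, Fin.forall_fin_succ, hx, hw₁, hw₂])
  have hcol (j : Fin m) : F.col j = (4 * grad 0 j) • grad 0 + (4 * grad 1 j) • grad 1
      + (4 * grad 2 j) • grad 2 + pderivM m 𝒞 θ j • pderivM m 𝒞 θ := by
    ext i
    simp only [F, grad, ρ, Matrix.col_apply, Matrix.of_apply, Matrix.cons_val_zero,
      Matrix.cons_val_one, Matrix.cons_val, Pi.add_apply, Pi.smul_apply, smul_eq_mul]
    ring
  calc F.rank ≤ Fintype.card (Fin 3) :=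
        F.rank_le_card_of_col_mem_span grad fun j => by
          rw [hcol j]
          exact add_mem (add_mem (add_mem (smul_mem _ _ (hgrad 0)) (smul_mem _ _ (hgrad 1)))
            (smul_mem _ _ (hgrad 2))) (smul_mem _ _ h𝒞)
    _ = 3 := Fintype.card_fin 3

/-- Intrinsic rank bound for the three-channel SLD quantum Fisher information matrix:
for any smooth `m`-parameter family of one-qubit reduced states with coordinates
`(x, w₁, w₂)` and `Δ > 0` at `θ`, the matrix
`F_{ij} = 4 ∂_i x ∂_j x + 4 ∂_i w₁ ∂_j w₁ + 4 ∂_i w₂ ∂_j w₂ + ∂_i 𝒞 ∂_j 𝒞`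
has rank at most `3`. -/
theorem qfim_rank_le_three (m : ℕ) (hm : 0 < m)
    (x w₁ w₂ : (Fin m → ℝ) → ℝ) (θ : Fin m → ℝ)
    (hx : DifferentiableAt ℝ x θ) (hw₁ : DifferentiableAt ℝ w₁ θ)
    (hw₂ : DifferentiableAt ℝ w₂ θ)
    (hΔ : x θ * (1 - x θ) - w₁ θ ^ 2 - w₂ θ ^ 2 > 0) :
    let 𝒞 : (Fin m → ℝ) → ℝ :=
      fun η => 2 * Real.sqrt (x η * (1 - x η) - w₁ η ^ 2 - w₂ η ^ 2)
    let F : Matrix (Fin m) (Fin m) ℝ := Matrix.of fun i j =>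
      4 * pderivM m x θ i * pderivM m x θ j
        + 4 * pderivM m w₁ θ i * pderivM m w₁ θ j
        + 4 * pderivM m w₂ θ i * pderivM m w₂ θ j
        + pderivM m 𝒞 θ i * pderivM m 𝒞 θ j
    F.rank ≤ 3 :=
  qfim_rank_le_three_general m x w₁ w₂ θ hx hw₁ hw₂ hΔ
end
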